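/- arXiv:2201.03927 — 6 statements merged into one kernel-verified Lean document; each statement's English description precedes it below -/
import Mathlib

section
/- Let R be a commutative noetherian ring and let S and T be classes of R-modules, each containing the zero module and closed under extensions. Then the extension class ST is closed under extensions if and only if TS ⊆ ST. -/
universe u

open CategoryTheory Opposite

noncomputable section

variable (R : Type u) [CommRing R]

/-- A class of `R`-modules, modeled as a set of objects of `ModuleCat R`. -/
abbrev ModClass (R : Type u) [CommRing R] := Set (ModuleCat.{u} R)

/-- `S` is closed under isomorphisms of `R`-modules. -/
def IsoClosed (S : ModClass R) : Prop :=
  ∀ (M N : ModuleCat.{u} R), (↥M ≃ₗ[R] ↥N) → M ∈ S → N ∈ S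

/-- `S` contains a zero module. -/
def ContainsZero (S : ModClass R) : Prop :=
  ModuleCat.of R PUnit ∈ S

/-- The extension class `ST`: all modules possessing a submodule belonging to `S`
with quotient belonging to `T`. -/
def ExtCls (S T : ModClass R) : ModClass R :=
  {M | ∃ L : Submodule R ↥M, ModuleCat.of R L ∈ S ∧ ModuleCat.of R (↥M ⧸ L) ∈ T}

/-- `S` is closed under extensions. -/
def ClosedUnderExt (S : ModClass R) : Prop :=
  ∀ (M : ModuleCat.{u} R) (L : Submodule R ↥M),
    ModuleCat.of R L ∈ S → ModuleCat.of R (↥M ⧸ L) ∈ S → M ∈ S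

/-- `S` is closed under submodules. -/
def ClosedUnderSub (S : ModClass R) : Prop :=
  ∀ (M : ModuleCat.{u} R) (L : Submodule R ↥M), M ∈ S → ModuleCat.of R L ∈ S

/-- `S` is closed under quotient modules. -/
def ClosedUnderQuot (S : ModClass R) : Prop :=
  ∀ (M : ModuleCat.{u} R) (L : Submodule R ↥M), M ∈ S → ModuleCat.of R (↥M ⧸ L) ∈ S

/-- `S` is a Serre class: it is closed under isomorphisms, contains the zero module, and
is closed under submodules, quotient modules, and extensions. -/
structure IsSerre (S : ModClass R) : Prop where
  isoClosed : IsoClosed R S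
  zero_mem : ContainsZero R S
  sub : ClosedUnderSub R S
  quot : ClosedUnderQuot R S
  ext : ClosedUnderExt R S

/-- The class `N` of finitely generated `R`-modules. -/
def FGCls : ModClass R := {M | Module.Finite R ↥M}

/-- The class `F` of `R`-modules with finite support. -/
def FinSuppCls : ModClass R := {M | (Module.support R ↥M).Finite}

/-- The class of all quotients of members of `S`. -/
def QuotCls (S : ModClass R) : ModClass R :=
  {M | ∃ (X : ModuleCat.{u} R) (f : ↥X →ₗ[R] ↥M), X ∈ S ∧ Function.Surjective f}

/-- `Γ_a(M) = M`: every element of `M` is annihilated by some power of `a`. -/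
def IsTorsionCls (a : Ideal R) (M : Type u) [AddCommGroup M] [Module R M] : Prop :=
  ∀ x : M, ∃ n : ℕ, ∀ r ∈ a ^ n, r • x = 0

/-- The class `S` satisfies Melkersson's condition `C_a`: any module `M` with `Γ_a(M) = M`
and `(0 :_M a) ∈ S` belongs to `S`. -/
def SatisfiesC (a : Ideal R) (S : ModClass R) : Prop :=
  ∀ M : ModuleCat.{u} R, IsTorsionCls R a ↥M →
    ModuleCat.of R (Submodule.torsionBySet R ↥M (a : Set R)) ∈ S → M ∈ S

/-- A module is weakly Laskerian if every quotient has finitely many associated primes. -/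
def IsWeaklyLaskerian (M : Type u) [AddCommGroup M] [Module R M] : Prop :=
  ∀ K : Submodule R M, (associatedPrimes R (M ⧸ K)).Finite

/-- A module is finitely weakly Laskerian if the quotient by every finitely generated submodule
has finitely many associated primes. -/
def IsFWLaskerian (M : Type u) [AddCommGroup M] [Module R M] : Prop :=
  ∀ K : Submodule R M, K.FG → (associatedPrimes R (M ⧸ K)).Finite

/-- A module is minimax if it has a finitely generated submodule with artinian quotient. -/
def IsMinimax (M : Type u) [AddCommGroup M] [Module R M] : Prop :=
  ∃ N : Submodule R M, N.FG ∧ IsArtinian R (M ⧸ N)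

/-- The `a`-torsion submodule `Γ_a(M)` of a module `M`. -/
def torsionGamma (a : Ideal R) (M : Type u) [AddCommGroup M] [Module R M] : Submodule R M :=
  ⨆ n : ℕ, Submodule.torsionBySet R M ((a ^ n : Ideal R) : Set R)

/-- `Ext_R^i(R/a, M)` as an object of `ModuleCat R`. -/
def extQuot (a : Ideal R) (i : ℕ) (M : ModuleCat.{u} R) : ModuleCat.{u} R :=
  ((Ext R (ModuleCat.{u} R) i).obj (op (ModuleCat.of R (R ⧸ a)))).obj M

/-- A module `X` is `a`-cofinite if `Supp X ⊆ V(a)` and all modules `Ext_R^i(R/a, X)` are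
finitely generated. -/
def IsCofinite (a : Ideal R) (M : ModuleCat.{u} R) : Prop :=
  Module.support R ↥M ⊆ PrimeSpectrum.zeroLocus (a : Set R) ∧
    ∀ i : ℕ, Module.Finite R ↥(extQuot R a i M)

/-- The ideal `a` has height at least one: every prime containing `a` has height at least one. -/
def HeightGEOne (a : Ideal R) : Prop :=
  ∀ p : PrimeSpectrum R, a ≤ p.asIdeal → 1 ≤ Order.height p

end

/-!
Everything is phrased through subquotients `B / A` (`A ≤ B`) of one module `M`. If
`0 → L → M → N → 0` has `L` and `N` in `ST`, refining the filtration `0 ≤ L ≤ M` gives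
`0 ≤ A ≤ L ≤ K ≤ M` with factors in `S, T, S, T`. The middle piece `K / A` lies in `TS ⊆ ST`, so
it is refined to `A ≤ B ≤ K` with `B / A ∈ S` and `K / B ∈ T`; closure of `S` and `T` under
extensions then puts `B` in `S` and `M / B` in `T`. Conversely `S ∪ T ⊆ ST` since both classes
contain `0`, so an extension of a module of `S` by one of `T` lies in `ST` once `ST` is closed
under extensions.
-/

section Subquotient

variable {R : Type u} [CommRing R] {M : Type u} [AddCommGroup M] [Module R M]

abbrev Subquotient (A B : Submodule R M) : Type u := B ⧸ A.comap B.subtype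

def subquotientBotEquiv (B : Submodule R M) : Subquotient ⊥ B ≃ₗ[R] B :=
  Submodule.quotEquivOfEqBot _ (by simp)

def subquotientTopEquiv (A : Submodule R M) : Subquotient A ⊤ ≃ₗ[R] M ⧸ A :=
  Submodule.Quotient.equiv _ _ Submodule.topEquiv (by ext; simp)

variable {A B C : Submodule R M}

/-- `B / A` as a submodule of `C / A`. -/
abbrev subquotientIncl (A B C : Submodule R M) : Submodule R (Subquotient A C) :=
  (B.comap C.subtype).map (A.comap C.subtype).mkQ

noncomputable def subquotientInclEquiv (hBC : B ≤ C) :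
    subquotientIncl A B C ≃ₗ[R] Subquotient A B :=
  let f := (A.comap C.subtype).mkQ ∘ₗ Submodule.inclusion hBC
  have hker : A.comap B.subtype = LinearMap.ker f := by
    ext; simp [f]
  have hrange : LinearMap.range f = subquotientIncl A B C := by
    rw [LinearMap.range_comp, Submodule.range_inclusion]
  ((Submodule.quotEquivOfEq _ _ hker).trans
    (f.quotKerEquivRange.trans (LinearEquiv.ofEq _ _ hrange))).symm

def subquotientQuotientEquiv (hAB : A ≤ B) :
    (Subquotient A C ⧸ subquotientIncl A B C) ≃ₗ[R] Subquotient B C :=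
  Submodule.quotientQuotientEquivQuotient _ _ (Submodule.comap_mono hAB)

theorem exists_subquotientIncl_eq (hAC : A ≤ C) (Q : Submodule R (Subquotient A C)) :
    ∃ B, A ≤ B ∧ B ≤ C ∧ subquotientIncl A B C = Q := by
  refine ⟨(Q.comap (A.comap C.subtype).mkQ).map C.subtype, ?_, Submodule.map_subtype_le _ _, ?_⟩
  · intro x hx
    refine ⟨⟨x, hAC hx⟩, ?_, rfl⟩
    have hx0 : (A.comap C.subtype).mkQ ⟨x, hAC hx⟩ = 0 := (Submodule.Quotient.mk_eq_zero _).2 hx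
    simp [hx0]
  · rw [subquotientIncl, Submodule.comap_map_eq_of_injective C.injective_subtype,
      Submodule.map_comap_eq_of_surjective (Submodule.mkQ_surjective _)]

end Subquotient

section ExtensionClasses

variable {R : Type u} [CommRing R] {S T : ModClass R}

theorem IsoClosed.mem_iff (hS : IsoClosed R S) {X Y : Type u} [AddCommGroup X] [Module R X]
    [AddCommGroup Y] [Module R Y] (e : X ≃ₗ[R] Y) :
    ModuleCat.of R X ∈ S ↔ ModuleCat.of R Y ∈ S :=
  ⟨hS _ _ e, hS _ _ e.symm⟩

theorem IsoClosed.extCls (hS : IsoClosed R S) (hT : IsoClosed R T) :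
    IsoClosed R (ExtCls R S T) := by
  rintro M N e ⟨L, hL, hML⟩
  refine ⟨L.map (e : M →ₗ[R] N), (hS.mem_iff (e.submoduleMap L)).1 hL, ?_⟩
  exact (hT.mem_iff (Submodule.Quotient.equiv L _ e rfl)).1 hML

theorem subset_extCls_left (hS : IsoClosed R S) (hT : IsoClosed R T) (hT0 : ContainsZero R T) :
    S ⊆ ExtCls R S T := by
  intro M hM
  have : Subsingleton (M ⧸ (⊤ : Submodule R M)) := Submodule.Quotient.subsingleton_iff.2 rfl
  exact ⟨⊤, (hS.mem_iff Submodule.topEquiv).2 hM,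
    (hT.mem_iff (LinearEquiv.ofSubsingleton _ _)).1 hT0⟩

theorem subset_extCls_right (hS : IsoClosed R S) (hT : IsoClosed R T) (hS0 : ContainsZero R S) :
    T ⊆ ExtCls R S T := by
  intro M hM
  have : Subsingleton (⊥ : Submodule R M) := Submodule.subsingleton_iff_eq_bot.2 rfl
  exact ⟨⊥, (hS.mem_iff (LinearEquiv.ofSubsingleton _ _)).1 hS0,
    (hT.mem_iff (Submodule.quotEquivOfEqBot ⊥ rfl)).2 hM⟩

section Subquotient

variable {M : Type u} [AddCommGroup M] [Module R M] {A B C : Submodule R M}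

theorem subquotient_mem_extCls_iff (hS : IsoClosed R S) (hT : IsoClosed R T) (hAC : A ≤ C) :
    ModuleCat.of R (Subquotient A C) ∈ ExtCls R S T ↔
      ∃ B, A ≤ B ∧ B ≤ C ∧ ModuleCat.of R (Subquotient A B) ∈ S ∧
        ModuleCat.of R (Subquotient B C) ∈ T := by
  constructor
  · rintro ⟨Q, hQ, hCQ⟩
    obtain ⟨B, hAB, hBC, rfl⟩ := exists_subquotientIncl_eq hAC Q
    exact ⟨B, hAB, hBC, (hS.mem_iff (subquotientInclEquiv hBC)).1 hQ,
      (hT.mem_iff (subquotientQuotientEquiv hAB)).1 hCQ⟩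
  · rintro ⟨B, hAB, hBC, hAB', hBC'⟩
    exact ⟨subquotientIncl A B C, (hS.mem_iff (subquotientInclEquiv hBC)).2 hAB',
      (hT.mem_iff (subquotientQuotientEquiv hAB)).2 hBC'⟩

theorem ClosedUnderExt.subquotient_mem (hSext : ClosedUnderExt R S) (hS : IsoClosed R S)
    (hAB : A ≤ B) (hBC : B ≤ C) (hAB' : ModuleCat.of R (Subquotient A B) ∈ S)
    (hBC' : ModuleCat.of R (Subquotient B C) ∈ S) : ModuleCat.of R (Subquotient A C) ∈ S := by
  obtain ⟨L, hL, hCL⟩ :=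
    (subquotient_mem_extCls_iff hS hS (hAB.trans hBC)).2 ⟨B, hAB, hBC, hAB', hBC'⟩
  exact hSext _ L hL hCL

end Subquotient

theorem closedUnderExt_extCls (hS : IsoClosed R S) (hT : IsoClosed R T)
    (hSext : ClosedUnderExt R S) (hText : ClosedUnderExt R T)
    (hTS : ExtCls R T S ⊆ ExtCls R S T) : ClosedUnderExt R (ExtCls R S T) := by
  intro M L hL hML
  have hST := hS.extCls hT
  rw [← hST.mem_iff (subquotientBotEquiv L)] at hL
  rw [← hST.mem_iff (subquotientTopEquiv L)] at hML
  obtain ⟨A, -, hAL, hA, hLA⟩ := (subquotient_mem_extCls_iff hS hT bot_le).1 hL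
  obtain ⟨K, hLK, -, hKL, hK⟩ := (subquotient_mem_extCls_iff hS hT le_top).1 hML
  have hAK : A ≤ K := hAL.trans hLK
  obtain ⟨B, hAB, hBK, hBA, hKB⟩ := (subquotient_mem_extCls_iff hS hT hAK).1 <|
    hTS <| (subquotient_mem_extCls_iff hT hS hAK).2 ⟨L, hAL, hLK, hLA, hKL⟩
  suffices ModuleCat.of R (Subquotient ⊥ (⊤ : Submodule R M)) ∈ ExtCls R S T from
    (hST.mem_iff ((subquotientBotEquiv ⊤).trans Submodule.topEquiv)).1 this
  exact (subquotient_mem_extCls_iff hS hT le_top).2 ⟨B, bot_le, le_top,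
    hSext.subquotient_mem hS bot_le hAB hA hBA, hText.subquotient_mem hT hBK le_top hKB hK⟩

end ExtensionClasses

theorem extCls_closedUnderExt_iff_general (R : Type u) [CommRing R]
    (S T : ModClass R)
    (hSiso : IsoClosed R S) (hTiso : IsoClosed R T)
    (hS0 : ContainsZero R S) (hT0 : ContainsZero R T)
    (hSext : ClosedUnderExt R S) (hText : ClosedUnderExt R T) :
    ClosedUnderExt R (ExtCls R S T) ↔ ExtCls R T S ⊆ ExtCls R S T := by
  refine ⟨fun hclosed M ⟨L, hL, hML⟩ => ?_, closedUnderExt_extCls hSiso hTiso hSext hText⟩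
  exact hclosed M L (subset_extCls_right hSiso hTiso hS0 hL)
    (subset_extCls_left hSiso hTiso hT0 hML)

/-- For classes `S` and `T` of modules over a commutative noetherian ring,
each containing the zero module and closed under extensions (and under isomorphisms),
the extension class `ST` is closed under extensions iff `TS ⊆ ST`. -/
theorem extCls_closedUnderExt_iff (R : Type u) [CommRing R] [IsNoetherianRing R]
    (S T : ModClass R)
    (hSiso : IsoClosed R S) (hTiso : IsoClosed R T)
    (hS0 : ContainsZero R S) (hT0 : ContainsZero R T)
    (hSext : ClosedUnderExt R S) (hText : ClosedUnderExt R T) :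
    ClosedUnderExt R (ExtCls R S T) ↔ ExtCls R T S ⊆ ExtCls R S T :=
  extCls_closedUnderExt_iff_general R S T hSiso hTiso hS0 hT0 hSext hText
end

section
/- Let R be a commutative noetherian ring, let N denote the class of finitely generated R-modules, and let S be a class of R-modules containing the zero module. Then SN ⊆ N(S_quot), where S_quot denotes the class of all quotient modules of members of S. In particular, if S is closed under quotient modules and extensions, then the extension class NS is closed under quotient modules and extensions. -/
universe u

open CategoryTheory Opposite

/-! Whenever `M ⧸ L` is finitely generated, some finitely generated `K ≤ M` satisfies
`L ⊔ K = ⊤`, so `L` maps onto `M ⧸ K`; this gives `SN ⊆ N(S_quot)`. For the closure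
properties of `NS`, note that `(M ⧸ K) ⧸ L` and `(M ⧸ L) ⧸ K` are both `M ⧸ (K ⊔ L)`; in an
extension one lifts the finitely generated submodule of `M ⧸ L` to `M` and adds to it the
finitely generated submodule of `L`. -/

namespace Submodule

variable {R M N : Type*} [CommRing R] [AddCommGroup M] [Module R M] [AddCommGroup N] [Module R N]

theorem FG.exists_fg_map_eq_of_surjective {f : M →ₗ[R] N} (hf : Function.Surjective f)
    {t : Submodule R N} (ht : t.FG) : ∃ s : Submodule R M, s.FG ∧ s.map f = t := by
  obtain ⟨u, rfl⟩ := ht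
  refine ⟨span R (Function.surjInv hf '' u), fg_span (u.finite_toSet.image _), ?_⟩
  rw [map_span, Set.image_image]
  simp only [Function.surjInv_eq hf, Set.image_id']

theorem exists_fg_sup_eq_top (L : Submodule R M) [Module.Finite R (M ⧸ L)] :
    ∃ K : Submodule R M, K.FG ∧ L ⊔ K = ⊤ := by
  obtain ⟨K, hK, hKL⟩ :=
    (Module.Finite.fg_top (R := R) (M := M ⧸ L)).exists_fg_map_eq_of_surjective L.mkQ_surjective
  exact ⟨K, hK, (map_mkQ_eq_top L K).mp hKL⟩

def quotientQuotientSwap (K L : Submodule R M) :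
    ((M ⧸ K) ⧸ L.map K.mkQ) ≃ₗ[R] (M ⧸ L) ⧸ K.map L.mkQ :=
  quotientQuotientEquivQuotientSup K L ≪≫ₗ quotEquivOfEq _ _ (sup_comm K L) ≪≫ₗ
    (quotientQuotientEquivQuotientSup L K).symm

end Submodule

open Submodule

section

variable {R : Type u} [CommRing R] {S : ModClass R}

theorem IsoClosed.mem_of_surjective (hiso : IsoClosed R S) (hquot : ClosedUnderQuot R S)
    {X Y : Type u} [AddCommGroup X] [Module R X] [AddCommGroup Y] [Module R Y]
    (hX : ModuleCat.of R X ∈ S) {f : X →ₗ[R] Y} (hf : Function.Surjective f) :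
    ModuleCat.of R Y ∈ S :=
  hiso _ (ModuleCat.of R Y) (f.quotKerEquivOfSurjective hf) (hquot _ _ hX)

theorem extCls_fg_subset_extCls_fg_quotCls :
    ExtCls R S (FGCls R) ⊆ ExtCls R (FGCls R) (QuotCls R S) := by
  rintro M ⟨L, hL, hML⟩
  have : Module.Finite R (M ⧸ L) := hML
  obtain ⟨K, hK, hLK⟩ := L.exists_fg_sup_eq_top
  refine ⟨K, Module.Finite.iff_fg.mpr hK, ModuleCat.of R L, K.mkQ ∘ₗ L.subtype, hL, ?_⟩
  rw [← LinearMap.range_eq_top, LinearMap.range_comp, range_subtype, map_mkQ_eq_top, sup_comm,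
    hLK]

theorem closedUnderQuot_extCls_fg (hiso : IsoClosed R S) (hquot : ClosedUnderQuot R S) :
    ClosedUnderQuot R (ExtCls R (FGCls R) S) := by
  rintro M L ⟨K, hK, hMK⟩
  have : Module.Finite R K := hK
  exact ⟨K.map L.mkQ, Module.Finite.map K L.mkQ,
    hiso _ (.of R ((M ⧸ L) ⧸ K.map L.mkQ)) (quotientQuotientSwap K L) (hquot _ _ hMK)⟩

theorem closedUnderExt_extCls_fg (hiso : IsoClosed R S) (hquot : ClosedUnderQuot R S)
    (hext : ClosedUnderExt R S) : ClosedUnderExt R (ExtCls R (FGCls R) S) := by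
  rintro M L ⟨K₁, hK₁, hLK₁⟩ ⟨K₂', hK₂', hMLK₂'⟩
  obtain ⟨K₂, hK₂, hK₂K₂'⟩ :=
    (Module.Finite.iff_fg.mp hK₂').exists_fg_map_eq_of_surjective L.mkQ_surjective
  set K := K₁.map L.subtype ⊔ K₂
  have hK : K.FG := ((Module.Finite.iff_fg.mp hK₁).map _).sup hK₂
  have hK₁K : K₁ ≤ LinearMap.ker (K.mkQ.submoduleMap L) := fun x hx ↦
    LinearMap.mem_ker.mpr <| Subtype.ext <| (Quotient.mk_eq_zero K).mpr <|
      mem_sup_left (mem_map_of_mem hx)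
  have hKL : K.map L.mkQ = K₂' := by
    rw [Submodule.map_sup, ← hK₂K₂', eq_bot_iff.mpr ((map_mono (map_subtype_le L K₁)).trans
      (mkQ_map_self L).le), bot_sup_eq]
  refine ⟨K, Module.Finite.iff_fg.mpr hK, hext _ (L.map K.mkQ) ?_ ?_⟩
  · refine hiso.mem_of_surjective hquot hLK₁ (f := K₁.liftQ _ hK₁K) ?_
    rw [← LinearMap.range_eq_top, range_liftQ, LinearMap.range_eq_top]
    exact LinearMap.submoduleMap_surjective _ _
  · exact hiso _ _ (quotientQuotientSwap K L ≪≫ₗ quotEquivOfEq _ _ hKL).symm hMLK₂'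

end

theorem extCls_fg_subset_and_closure_general (R : Type u) [CommRing R]
    (S : ModClass R) (hSiso : IsoClosed R S) :
    ExtCls R S (FGCls R) ⊆ ExtCls R (FGCls R) (QuotCls R S) ∧
    (ClosedUnderQuot R S → ClosedUnderExt R S →
      ClosedUnderQuot R (ExtCls R (FGCls R) S) ∧ ClosedUnderExt R (ExtCls R (FGCls R) S)) :=
  ⟨extCls_fg_subset_extCls_fg_quotCls, fun hquot hext ↦
    ⟨closedUnderQuot_extCls_fg hSiso hquot, closedUnderExt_extCls_fg hSiso hquot hext⟩⟩

/-- `SN ⊆ N(S_quot)`; in particular, if `S` is closed under quotients and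
extensions, then `NS` is closed under quotients and extensions. -/
theorem extCls_fg_subset_and_closure (R : Type u) [CommRing R] [IsNoetherianRing R]
    (S : ModClass R) (hSiso : IsoClosed R S) (hS0 : ContainsZero R S) :
    ExtCls R S (FGCls R) ⊆ ExtCls R (FGCls R) (QuotCls R S) ∧
    (ClosedUnderQuot R S → ClosedUnderExt R S →
      ClosedUnderQuot R (ExtCls R (FGCls R) S) ∧ ClosedUnderExt R (ExtCls R (FGCls R) S)) :=
  extCls_fg_subset_and_closure_general R S hSiso
end

section
/- Let R be a commutative noetherian ring and let S be a class of R-modules that is closed under submodules, extensions, and directed unions of submodules (i.e., if a module is the union of a directed family of submodules each belonging to S, then it belongs to S). Then S satisfies condition C_a for every ideal a of R. -/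
universe u

open CategoryTheory Opposite

/-!
Write `Tₙ = (0 :_M aⁿ)`. If `a` is generated by `g₁, …, gₖ`, then `x ↦ (gᵢ • x)ᵢ` maps
`Tₙ₊₁` into `Tₙᵏ` with kernel `T₁`, so `Tₙ₊₁` is an extension of a submodule of `Tₙᵏ` by `T₁`,
and by induction every `Tₙ` lies in `S`. An `a`-torsion module is the directed union of the `Tₙ`.
-/

namespace Submodule

variable {R : Type u} [CommRing R] {M : Type u} [AddCommGroup M] [Module R M]

theorem mem_torsionBySet_iff_of_span_range_eq {ι : Type*} {g : ι → R} {a : Ideal R}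
    (hg : Ideal.span (Set.range g) = a) (x : M) :
    x ∈ torsionBySet R M a ↔ ∀ i, g i • x = 0 := by
  rw [← hg, ← torsionBySet_eq_torsionBySet_span, mem_torsionBySet_iff]
  simp only [SetCoe.forall, Set.forall_mem_range]

theorem smul_mem_torsionBySet_pow {a : Ideal R} {n : ℕ} {x : M}
    (hx : x ∈ torsionBySet R M ↑(a ^ (n + 1))) {r : R} (hr : r ∈ a) :
    r • x ∈ torsionBySet R M ↑(a ^ n) := by
  rw [mem_torsionBySet_iff] at hx ⊢
  rintro ⟨s, hs⟩
  rw [smul_smul]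
  exact hx ⟨s * r, pow_succ a n ▸ Ideal.mul_mem_mul hs hr⟩

end Submodule

open Submodule

namespace ModClass

variable {R : Type u} [CommRing R] {S : ModClass R}
  {X Y : Type u} [AddCommGroup X] [Module R X] [AddCommGroup Y] [Module R Y]

theorem mem_of_injective (hiso : IsoClosed R S) (hsub : ClosedUnderSub R S)
    (f : X →ₗ[R] Y) (hf : Function.Injective f) (hY : ModuleCat.of R Y ∈ S) :
    ModuleCat.of R X ∈ S :=
  hiso _ _ (LinearEquiv.ofInjective f hf).symm (hsub _ (LinearMap.range f) hY)

theorem mem_of_ker_mem (hiso : IsoClosed R S) (hsub : ClosedUnderSub R S)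
    (hext : ClosedUnderExt R S) (f : X →ₗ[R] Y) (hY : ModuleCat.of R Y ∈ S)
    (hker : ModuleCat.of R (LinearMap.ker f) ∈ S) : ModuleCat.of R X ∈ S :=
  hext _ _ hker (hiso _ _ f.quotKerEquivRange.symm (hsub _ (LinearMap.range f) hY))

theorem prod_mem (hiso : IsoClosed R S) (hsub : ClosedUnderSub R S) (hext : ClosedUnderExt R S)
    (hX : ModuleCat.of R X ∈ S) (hY : ModuleCat.of R Y ∈ S) : ModuleCat.of R (X × Y) ∈ S := by
  refine mem_of_ker_mem hiso hsub hext (LinearMap.snd R X Y) hY ?_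
  rw [LinearMap.ker_snd]
  exact hiso _ _ (LinearEquiv.ofInjective _ LinearMap.inl_injective) hX

theorem pi_fin_mem (hiso : IsoClosed R S) (hsub : ClosedUnderSub R S) (hext : ClosedUnderExt R S)
    (hX : ModuleCat.of R X ∈ S) (k : ℕ) : ModuleCat.of R (Fin k → X) ∈ S := by
  induction k with
  | zero =>
    exact mem_of_injective hiso hsub (0 : (Fin 0 → X) →ₗ[R] X)
      (Function.injective_of_subsingleton _) hX
  | succ k ih => exact hiso _ _ (Fin.consLinearEquiv R fun _ => X) (prod_mem hiso hsub hext hX ih)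

theorem torsionBySet_pow_succ_mem {M : Type u} [AddCommGroup M] [Module R M]
    (hiso : IsoClosed R S) (hsub : ClosedUnderSub R S) (hext : ClosedUnderExt R S)
    {a : Ideal R} (ha : a.FG) (n : ℕ) (h₁ : ModuleCat.of R (torsionBySet R M a) ∈ S)
    (hn : ModuleCat.of R (torsionBySet R M ↑(a ^ n)) ∈ S) :
    ModuleCat.of R (torsionBySet R M ↑(a ^ (n + 1))) ∈ S := by
  obtain ⟨k, g, hg⟩ := fg_iff_exists_fin_generating_family.mp ha
  have hga : ∀ i, g i ∈ a := fun i => hg ▸ Ideal.subset_span (Set.mem_range_self i)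
  let φ : torsionBySet R M ↑(a ^ (n + 1)) →ₗ[R] Fin k → torsionBySet R M ↑(a ^ n) :=
    LinearMap.pi fun i => ((g i) • (torsionBySet R M ↑(a ^ (n + 1))).subtype).codRestrict _
      fun x => smul_mem_torsionBySet_pow x.2 (hga i)
  have hker : LinearMap.ker φ = comap (torsionBySet R M ↑(a ^ (n + 1))).subtype
      (torsionBySet R M a) := by
    ext x
    rw [mem_comap, mem_torsionBySet_iff_of_span_range_eq hg]
    simp only [φ, LinearMap.mem_ker, funext_iff, LinearMap.pi_apply, Pi.zero_apply,
      Subtype.ext_iff, ZeroMemClass.coe_zero]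
    exact Iff.rfl
  refine mem_of_ker_mem hiso hsub hext φ (pi_fin_mem hiso hsub hext hn k) ?_
  rw [hker]
  exact hiso _ _ (comapSubtypeEquivOfLe
    (torsionBySet_le_torsionBySet_of_subset (Ideal.pow_le_self n.succ_ne_zero))).symm h₁

end ModClass

open ModClass

/-- A class closed under submodules, extensions and directed unions of
submodules satisfies `C_a` for every ideal `a`. -/
theorem satisfiesC_of_closedUnderDirectedUnions (R : Type u) [CommRing R] [IsNoetherianRing R]
    (S : ModClass R) (hiso : IsoClosed R S)
    (hsub : ClosedUnderSub R S) (hext : ClosedUnderExt R S)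
    (hdir : ∀ (M : ModuleCat.{u} R) (ι : Type u) [Nonempty ι] (f : ι → Submodule R ↥M),
      Directed (· ≤ ·) f → (∀ i, ModuleCat.of R (f i) ∈ S) → (⨆ i, f i) = ⊤ → M ∈ S)
    (a : Ideal R) :
    SatisfiesC R a S := by
  intro M htor h₁
  have hT : ∀ n, ModuleCat.of R (torsionBySet R M ↑(a ^ n)) ∈ S := by
    intro n
    induction n with
    | zero =>
      exact mem_of_injective hiso hsub
        (inclusion (torsionBySet_le_torsionBySet_of_subset (by simp))) (inclusion_injective _) h₁
    | succ n ih =>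
      exact torsionBySet_pow_succ_mem hiso hsub hext (IsNoetherian.noetherian a) n h₁ ih
  refine hdir M (ULift ℕ) (fun n => torsionBySet R M ↑(a ^ n.down)) ?_ (fun n => hT n.down) ?_
  · exact fun i j => ⟨⟨max i.down j.down⟩,
      torsionBySet_le_torsionBySet_pow _ _ (le_max_left _ _) a,
      torsionBySet_le_torsionBySet_pow _ _ (le_max_right _ _) a⟩
  · refine eq_top_iff.mpr fun x _ => ?_
    obtain ⟨n, hn⟩ := htor x
    exact mem_iSup_of_mem ⟨n⟩ ((mem_torsionBySet_iff _ _).mpr fun r => hn r r.2)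
end

section
/- Let R be a commutative noetherian ring and let F denote the class of R-modules whose support is a finite set. Then F satisfies condition C_a for every ideal a of R. -/
/-!
If `M` is `a`-torsion and `Mₚ ≠ 0`, the image of `M` in `Mₚ` is a nonzero `a`-torsion module,
so it has a nonzero element killed by `a`. Lifting it to `y ∈ M`, each `r • y` with `r ∈ a`
dies in `Mₚ`; since `a` is finitely generated, a single `s ∉ p` kills all of them, and `s • y`
is an element of `(0 :_M a)` that survives in `Mₚ`. Hence `Supp M ⊆ Supp (0 :_M a)`.
-/

universe u

open CategoryTheory Opposite

theorem Ideal.FG.exists_mem_forall_smul_smul_eq_zero {R M : Type*} [CommRing R] [AddCommGroup M]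
    [Module R M] {S : Submonoid R} {I : Ideal R} (hI : I.FG) {x : M}
    (h : ∀ r ∈ I, ∃ s ∈ S, s • r • x = 0) : ∃ s ∈ S, ∀ r ∈ I, s • r • x = 0 := by
  obtain ⟨t, rfl⟩ := hI
  choose! s hsS hs using fun r (hr : r ∈ t) => h r (Ideal.subset_span hr)
  refine ⟨∏ r ∈ t, s r, S.prod_mem hsS, fun r hr => ?_⟩
  suffices Ideal.span t ≤ (R ∙ (∏ r ∈ t, s r) • x).annihilator by
    rw [smul_comm]
    exact (Submodule.mem_annihilator_span_singleton _ _).mp (this hr)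
  rw [Ideal.span_le]
  intro r hr
  obtain ⟨k, hk⟩ := Finset.dvd_prod_of_mem s hr
  rw [SetLike.mem_coe, Submodule.mem_annihilator_span_singleton, smul_comm, hk, mul_comm,
    mul_smul, hs r hr, smul_zero]

section

variable {R : Type u} [CommRing R] {M : Type u} [AddCommGroup M] [Module R M] {a : Ideal R}

theorem IsTorsionCls.quotient (h : IsTorsionCls R a M) (N : Submodule R M) :
    IsTorsionCls R a (M ⧸ N) := by
  intro x
  obtain ⟨x, rfl⟩ := N.mkQ_surjective x
  obtain ⟨n, hn⟩ := h x
  exact ⟨n, fun r hr => by rw [← map_smul, hn r hr, map_zero]⟩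

theorem exists_ne_zero_mem_torsionBySet_of_pow {x : M} (hx : x ≠ 0) (n : ℕ)
    (hn : ∀ r ∈ a ^ n, r • x = 0) : ∃ y ∈ Submodule.torsionBySet R M a, y ≠ 0 := by
  induction n generalizing x with
  | zero => exact absurd (by simpa using hn 1 (by simp)) hx
  | succ n ih =>
    by_cases hax : ∀ r ∈ a, r • x = 0
    · exact ⟨x, (Submodule.mem_torsionBySet_iff _ _).mpr fun r => hax r r.2, hx⟩
    push Not at hax
    obtain ⟨r, hr, hrx⟩ := hax
    refine ih hrx fun t ht => ?_
    rw [smul_smul]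
    exact hn _ (pow_succ a n ▸ Ideal.mul_mem_mul ht hr)

theorem IsTorsionCls.exists_ne_zero_mem_torsionBySet [Nontrivial M] (h : IsTorsionCls R a M) :
    ∃ y ∈ Submodule.torsionBySet R M a, y ≠ 0 := by
  obtain ⟨x, hx⟩ := exists_ne (0 : M)
  obtain ⟨n, hn⟩ := h x
  exact exists_ne_zero_mem_torsionBySet_of_pow hx n hn

theorem IsTorsionCls.support_subset_support_torsionBySet [IsNoetherianRing R]
    (htor : IsTorsionCls R a M) :
    Module.support R M ⊆ Module.support R (Submodule.torsionBySet R M a) := by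
  intro p hp
  set S := p.asIdeal.primeCompl
  set K := LinearMap.ker (LocalizedModule.mkLinearMap S M)
  have hK {x : M} : x ∈ K ↔ ∃ s ∈ S, s • x = 0 := LocalizedModule.mem_ker_mkLinearMap_iff
  obtain ⟨m, hm⟩ := Module.mem_support_iff'.mp hp
  have hmK : m ∉ K := fun hmK => by
    obtain ⟨s, hs, hsm⟩ := hK.mp hmK
    exact hm s hs hsm
  have : Nontrivial (M ⧸ K) := ⟨K.mkQ m, 0, (Submodule.Quotient.mk_eq_zero K).not.mpr hmK⟩
  obtain ⟨y', hy'a, hy'0⟩ := (htor.quotient K).exists_ne_zero_mem_torsionBySet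
  obtain ⟨y, rfl⟩ := K.mkQ_surjective y'
  have hyK : y ∉ K := by simpa using hy'0
  obtain ⟨s, hs, hsy⟩ : ∃ s ∈ S, ∀ r ∈ a, s • r • y = 0 :=
    Ideal.FG.exists_mem_forall_smul_smul_eq_zero (IsNoetherian.noetherian a) fun r hr =>
      hK.mp <| (Submodule.Quotient.mk_eq_zero K).mp <|
        (Submodule.mem_torsionBySet_iff _ _).mp hy'a ⟨r, hr⟩
  have hsya : s • y ∈ Submodule.torsionBySet R M a :=
    (Submodule.mem_torsionBySet_iff _ _).mpr fun r => by rw [smul_comm]; exact hsy r r.2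
  refine Module.mem_support_iff'.mpr ⟨⟨s • y, hsya⟩, fun r hr hrsy => hyK (hK.mpr ?_)⟩
  refine ⟨r * s, S.mul_mem hr hs, ?_⟩
  rw [mul_smul]
  exact congrArg Subtype.val hrsy

end

/-- The class of modules with finite support satisfies `C_a` for every ideal. -/
theorem finSupp_satisfiesC (R : Type u) [CommRing R] [IsNoetherianRing R] (a : Ideal R) :
    SatisfiesC R a (FinSuppCls R) :=
  fun _ htor hfin => hfin.subset htor.support_subset_support_torsionBySet
end

section
/- Let R be a commutative noetherian ring and let Fw denote the class of finitely weakly Laskerian R-modules. Then: (i) if M ∈ Fw and K is a finitely generated submodule of M, then M/K ∈ Fw; (ii) Fw is closed under submodules and under extensions. -/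
universe u

open CategoryTheory Opposite

/-!
For submodules `L, K` of `M`, the composite `L → M → M ⧸ K` has kernel `L ∩ K` and cokernel
`M ⧸ (L + K) ≃ (M ⧸ L) ⧸ K̄`, so
`Ass (L ⧸ L ∩ K) ⊆ Ass (M ⧸ K) ⊆ Ass (L ⧸ L ∩ K) ∪ Ass ((M ⧸ L) ⧸ K̄)`.
Taking `K ⊆ L` in the first inclusion gives closure under submodules; for extensions, `L ∩ K` is
finitely generated along with `K` because `R` is noetherian. For quotients, a finitely generated
submodule of `M ⧸ K` pulls back to a finitely generated submodule of `M` when `K` is.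
-/

section

variable {R M : Type*} [CommRing R] [AddCommGroup M] [Module R M]

theorem associatedPrimes_quotient_quotient (K : Submodule R M) (N : Submodule R (M ⧸ K)) :
    associatedPrimes R ((M ⧸ K) ⧸ N) = associatedPrimes R (M ⧸ N.comap K.mkQ) := by
  have hN : (N.comap K.mkQ).map K.mkQ = N :=
    Submodule.map_comap_eq_of_surjective K.mkQ_surjective N
  exact LinearEquiv.AssociatedPrimes.eq ((Submodule.quotEquivOfEq _ _ hN.symm).trans
    (Submodule.quotientQuotientEquivQuotient K _ (Submodule.le_comap_mkQ K N)))

theorem Submodule.FG.comap_mkQ {K : Submodule R M} {N : Submodule R (M ⧸ K)} (hK : K.FG)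
    (hN : N.FG) : (N.comap K.mkQ).FG := by
  refine Submodule.fg_of_fg_map_of_fg_inf_ker K.mkQ ?_ ?_
  · rwa [Submodule.map_comap_eq_of_surjective K.mkQ_surjective]
  · rwa [Submodule.ker_mkQ, inf_eq_right.mpr (Submodule.le_comap_mkQ K N)]

theorem associatedPrimes_quotient_comap_subtype (L K : Submodule R M) :
    associatedPrimes R (L ⧸ K.comap L.subtype) = associatedPrimes R (L.map K.mkQ) := by
  have hker : LinearMap.ker (K.mkQ ∘ₗ L.subtype) = K.comap L.subtype := by
    rw [LinearMap.ker_comp, Submodule.ker_mkQ]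
  have hrange : LinearMap.range (K.mkQ ∘ₗ L.subtype) = L.map K.mkQ := by
    rw [LinearMap.range_comp, Submodule.range_subtype]
  exact LinearEquiv.AssociatedPrimes.eq ((Submodule.quotEquivOfEq _ _ hker.symm).trans
    ((K.mkQ ∘ₗ L.subtype).quotKerEquivRange.trans (LinearEquiv.ofEq _ _ hrange)))

theorem associatedPrimes_quotient_comap_subtype_subset (L K : Submodule R M) :
    associatedPrimes R (L ⧸ K.comap L.subtype) ⊆ associatedPrimes R (M ⧸ K) := by
  rw [associatedPrimes_quotient_comap_subtype]
  exact associatedPrimes.subset_of_injective (Submodule.injective_subtype _)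

theorem associatedPrimes_quotient_subset_union (L K : Submodule R M) :
    associatedPrimes R (M ⧸ K) ⊆
      associatedPrimes R (L ⧸ K.comap L.subtype) ∪
        associatedPrimes R ((M ⧸ L) ⧸ K.map L.mkQ) := by
  have hcoker : ((M ⧸ K) ⧸ L.map K.mkQ) ≃ₗ[R] ((M ⧸ L) ⧸ K.map L.mkQ) :=
    (Submodule.quotientQuotientEquivQuotientSup K L).trans
      ((Submodule.quotEquivOfEq _ _ (sup_comm K L)).trans
        (Submodule.quotientQuotientEquivQuotientSup L K).symm)
  rw [associatedPrimes_quotient_comap_subtype, ← LinearEquiv.AssociatedPrimes.eq hcoker]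
  exact associatedPrimes.subset_union_of_exact (Submodule.injective_subtype _)
    (LinearMap.exact_subtype_mkQ _)

end

section

variable {R M : Type u} [CommRing R] [AddCommGroup M] [Module R M]

theorem IsFWLaskerian.quotient {K : Submodule R M} (hM : IsFWLaskerian R M) (hK : K.FG) :
    IsFWLaskerian R (M ⧸ K) := fun N hN => by
  rw [associatedPrimes_quotient_quotient]
  exact hM _ (hK.comap_mkQ hN)

theorem IsFWLaskerian.submodule (L : Submodule R M) (hM : IsFWLaskerian R M) :
    IsFWLaskerian R L := fun K hK => by
  rw [← Submodule.comap_map_eq_of_injective L.injective_subtype K]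
  exact (hM _ (hK.map L.subtype)).subset (associatedPrimes_quotient_comap_subtype_subset L _)

theorem IsFWLaskerian.of_submodule_of_quotient [IsNoetherianRing R] {L : Submodule R M}
    (hL : IsFWLaskerian R L) (hML : IsFWLaskerian R (M ⧸ L)) : IsFWLaskerian R M := fun K hK => by
  have hLK : (K.comap L.subtype).FG := by
    refine Submodule.fg_of_fg_map_injective L.subtype L.injective_subtype ?_
    rw [Submodule.map_comap_subtype]
    exact hK.of_le inf_le_right
  exact ((hL _ hLK).union (hML _ (hK.map L.mkQ))).subset
    (associatedPrimes_quotient_subset_union L K)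

end

/-- (i) a quotient of a finitely weakly Laskerian module by a finitely
generated submodule is finitely weakly Laskerian; (ii) the class of finitely weakly
Laskerian modules is closed under submodules and extensions. -/
theorem fwLaskerian_closure (R : Type u) [CommRing R] [IsNoetherianRing R] :
    (∀ (M : Type u) [AddCommGroup M] [Module R M] (K : Submodule R M),
       IsFWLaskerian R M → K.FG → IsFWLaskerian R (M ⧸ K)) ∧
    (∀ (M : Type u) [AddCommGroup M] [Module R M] (L : Submodule R M),
       IsFWLaskerian R M → IsFWLaskerian R L) ∧
    (∀ (M : Type u) [AddCommGroup M] [Module R M] (L : Submodule R M),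
       IsFWLaskerian R L → IsFWLaskerian R (M ⧸ L) → IsFWLaskerian R M) :=
  ⟨fun _ _ _ _ hM hK => hM.quotient hK, fun _ _ _ L hM => hM.submodule L,
    fun _ _ _ _ hL hML => hL.of_submodule_of_quotient hML⟩
end

section
/- Let R be a commutative noetherian ring, let p be a prime ideal of R, and let E be an injective R-module containing a copy of R/p as an essential submodule (so E is an injective envelope of R/p). Let S be a Serre class of R-modules and let N denote the class of finitely generated modules. If E belongs to the extension class NS, then E ∈ S provided either the height of p is positive, or the height of p is zero and R/p ∈ S. -/
universe u

open CategoryTheory Opposite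

/-!
Every nonzero element of `E` has a multiple with annihilator `p`, so `p` is the only associated
prime of `E` and elements outside `p` act injectively on `E`. Hence a finitely generated
submodule `L` with `E ⧸ L ∈ S` is killed by some `p ^ t`, and it lies in `S` as soon as
`R ⧸ p` does, by filtering `L` by the submodules `p ^ i • L`. When `ht p > 0`, pick a prime
`q < p` and `a ∈ p \ q`; injectivity of `E` makes the nonzero element `f 1` divisible by
`a ^ t`, so `p ^ t` does not kill `E`. Then some `x ∈ E` satisfies `(L : x) ⊆ p`, for otherwise
`p ^ t • x = 0` for every `x`, and `R ⧸ p` is a quotient of `R ⧸ (L : x) ⊆ E ⧸ L`.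
-/

open Submodule

section Serre

variable {R : Type u} [CommRing R] {S : ModClass R}
  {A B : Type u} [AddCommGroup A] [Module R A] [AddCommGroup B] [Module R B]

theorem IsSerre.mem_of_injective (hS : IsSerre R S) (hB : ModuleCat.of R B ∈ S)
    {g : A →ₗ[R] B} (hg : Function.Injective g) : ModuleCat.of R A ∈ S :=
  hS.isoClosed _ _ (LinearEquiv.ofInjective g hg).symm (hS.sub _ _ hB)

theorem IsSerre.mem_of_surjective (hS : IsSerre R S) (hA : ModuleCat.of R A ∈ S)
    {g : A →ₗ[R] B} (hg : Function.Surjective g) : ModuleCat.of R B ∈ S :=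
  hS.isoClosed _ _ (g.quotKerEquivOfSurjective hg) (hS.quot _ _ hA)

theorem IsSerre.mem_of_fg_of_span_singleton_mem (hS : IsSerre R S) {N : Submodule R A}
    (hN : N.FG) (hx : ∀ x : A, ModuleCat.of R (R ∙ x) ∈ S) : ModuleCat.of R N ∈ S := by
  induction N, hN using Submodule.fg_induction with
  | singleton x => exact hx x
  | sup N₁ N₂ _ _ h₁ h₂ =>
    refine hS.ext (ModuleCat.of R ↥(N₁ ⊔ N₂)) (N₂.comap (N₁ ⊔ N₂).subtype) ?_ ?_
    · exact hS.isoClosed _ _ (comapSubtypeEquivOfLe le_sup_right).symm h₂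
    · exact hS.isoClosed _ _ (LinearMap.quotientInfEquivSupQuotient N₁ N₂) (hS.quot _ _ h₁)

theorem IsSerre.mem_of_le_annihilator (hS : IsSerre R S) {I : Ideal R}
    (hI : ModuleCat.of R (R ⧸ I) ∈ S) [Module.Finite R A] (h : I ≤ Module.annihilator R A) :
    ModuleCat.of R A ∈ S := by
  refine hS.isoClosed _ _ topEquiv (hS.mem_of_fg_of_span_singleton_mem Module.Finite.fg_top ?_)
  intro x
  have hle : I ≤ Ideal.torsionOf R A x := fun r hr ↦
    (Ideal.mem_torsionOf_iff x r).2 (Module.mem_annihilator.1 (h hr) x)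
  set e := Ideal.quotTorsionOfEquivSpanSingleton R A x
  exact hS.mem_of_surjective hI (g := e.toLinearMap ∘ₗ factor hle)
    (e.surjective.comp (factor_surjective hle))

theorem IsSerre.mem_of_pow_le_annihilator [IsNoetherianRing R] (hS : IsSerre R S) {I : Ideal R}
    (hI : ModuleCat.of R (R ⧸ I) ∈ S) (t : ℕ) [Module.Finite R A]
    (h : I ^ t ≤ Module.annihilator R A) : ModuleCat.of R A ∈ S := by
  induction t generalizing A with
  | zero => exact hS.mem_of_le_annihilator hI (le_top.trans (by simpa using h))
  | succ t ih =>
    have : IsNoetherian R A := isNoetherian_of_isNoetherianRing_of_finite R A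
    refine hS.ext (ModuleCat.of R A) (I • ⊤) (ih ?_) (hS.mem_of_le_annihilator hI ?_)
    · rw [← Submodule.annihilator_top, Submodule.le_annihilator_iff, pow_succ,
        Submodule.mul_smul] at h
      exact Submodule.le_annihilator_iff.2 h
    · intro r hr
      rw [Module.mem_annihilator]
      rintro ⟨x⟩
      exact (Submodule.Quotient.mk_eq_zero _).2 (smul_mem_smul hr mem_top)

theorem IsSerre.quotient_mem_of_colon_le (hS : IsSerre R S) {L : Submodule R A}
    (hL : ModuleCat.of R (A ⧸ L) ∈ S) {x : A} {I : Ideal R} (h : L.colon {x} ≤ I) :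
    ModuleCat.of R (R ⧸ I) ∈ S := by
  set g := LinearMap.toSpanSingleton R (A ⧸ L) (Submodule.Quotient.mk x)
  have hker : LinearMap.ker g = L.colon {x} := by
    ext r
    simp [g, mem_colon_singleton, ← Submodule.Quotient.mk_smul]
  have hg : ModuleCat.of R (R ⧸ LinearMap.ker g) ∈ S :=
    hS.mem_of_injective hL (LinearMap.ker_eq_bot.1 (ker_liftQ_eq_bot' _ g rfl))
  exact hS.mem_of_surjective hg (factor_surjective (hker.trans_le h))

end Serre

theorem Module.Injective.exists_smul_eq_of_colon_le {R : Type u} [CommRing R] {E : Type u}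
    [AddCommGroup E] [Module R E] (hE : Module.Injective R E) {r : R} {x : E}
    (h : (⊥ : Ideal R).colon {r} ≤ (⊥ : Submodule R E).colon {x}) :
    ∃ y : E, r • y = x := by
  set m := LinearMap.toSpanSingleton R R r
  have hker : LinearMap.ker m ≤ LinearMap.ker (LinearMap.toSpanSingleton R E x) := fun c hc ↦ by
    simpa [mem_colon_singleton] using h (by simpa [m, mem_colon_singleton] using hc)
  -- extend `c * r ↦ c • x` along `R ⧸ ann r ≅ (r) ⊆ R`
  obtain ⟨g, hg⟩ := hE.out ((LinearMap.ker m).liftQ m le_rfl)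
    (LinearMap.ker_eq_bot.1 (ker_liftQ_eq_bot' _ m rfl)) ((LinearMap.ker m).liftQ _ hker)
  refine ⟨g 1, ?_⟩
  have hg1 := hg (Submodule.Quotient.mk 1)
  rwa [liftQ_apply, liftQ_apply, LinearMap.toSpanSingleton_apply, one_smul,
    LinearMap.toSpanSingleton_apply, one_smul, ← mul_one r, ← smul_eq_mul, map_smul] at hg1

theorem exists_pow_le_annihilator_of_associatedPrimes_subset {R : Type u} [CommRing R]
    [IsNoetherianRing R] {M : Type u} [AddCommGroup M] [Module R M] [Module.Finite R M]
    {p : Ideal R} (h : associatedPrimes R M ⊆ {p}) :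
    ∃ n : ℕ, p ^ n ≤ Module.annihilator R M := by
  refine Ideal.exists_pow_le_of_le_radical_of_fg ?_ (IsNoetherian.noetherian p)
  rw [← Ideal.sInf_minimalPrimes]
  exact le_sInf fun q hq ↦
    (h (Module.associatedPrimes.minimalPrimes_annihilator_subset_associatedPrimes R M hq)).ge

def Submodule.IsEssential {R M : Type*} [Semiring R] [AddCommMonoid M] [Module R M]
    (N : Submodule R M) : Prop :=
  ∀ N' : Submodule R M, N' ≠ ⊥ → N ⊓ N' ≠ ⊥

theorem Submodule.IsEssential.exists_smul_mem_ne_zero {R M : Type*} [Semiring R]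
    [AddCommMonoid M] [Module R M] {N : Submodule R M} (hN : N.IsEssential) {y : M} (hy : y ≠ 0) :
    ∃ r : R, r • y ∈ N ∧ r • y ≠ 0 := by
  obtain ⟨z, hz, hz0⟩ := (Submodule.ne_bot_iff _).1 (hN (R ∙ y) (by simpa using hy))
  obtain ⟨hzN, hzy⟩ := mem_inf.1 hz
  obtain ⟨r, rfl⟩ := mem_span_singleton.1 hzy
  exact ⟨r, hzN, hz0⟩

section EssentialExtension

variable {R : Type u} [CommRing R] {p : Ideal R} [p.IsPrime] {E : Type u} [AddCommGroup E]
  [Module R E] {f : (R ⧸ p) →ₗ[R] E}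

theorem Ideal.Quotient.smul_eq_zero_iff_of_ne_zero {z : R ⧸ p} (hz : z ≠ 0) {r : R} :
    r • z = 0 ↔ r ∈ p := by
  rw [Algebra.smul_def, mul_eq_zero, or_iff_left hz, Ideal.Quotient.algebraMap_eq,
    Ideal.Quotient.eq_zero_iff_mem]

theorem colon_bot_singleton_eq_of_mem_range (hf : Function.Injective f) {z : E}
    (hz : z ∈ LinearMap.range f) (hz0 : z ≠ 0) : (⊥ : Submodule R E).colon {z} = p := by
  obtain ⟨w, rfl⟩ := hz
  ext r
  rw [mem_colon_singleton, mem_bot, ← map_smul, map_eq_zero_iff f hf,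
    Ideal.Quotient.smul_eq_zero_iff_of_ne_zero fun hw ↦ hz0 (by rw [hw, map_zero])]

theorem exists_colon_bot_smul_eq (hf : Function.Injective f)
    (hess : (LinearMap.range f).IsEssential) {y : E} (hy : y ≠ 0) :
    ∃ r : R, (⊥ : Submodule R E).colon {r • y} = p := by
  obtain ⟨r, hrf, hr0⟩ := hess.exists_smul_mem_ne_zero hy
  exact ⟨r, colon_bot_singleton_eq_of_mem_range hf hrf hr0⟩

theorem eq_zero_of_smul_eq_zero_of_notMem (hf : Function.Injective f)
    (hess : (LinearMap.range f).IsEssential) {s : R} (hs : s ∉ p) {x : E} (hx : s • x = 0) :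
    x = 0 := by
  by_contra hx0
  obtain ⟨r, hr⟩ := exists_colon_bot_smul_eq hf hess hx0
  apply hs
  rw [← hr, mem_colon_singleton, mem_bot, smul_comm, hx, smul_zero]

theorem associatedPrimes_subset_singleton [IsNoetherianRing R] (hf : Function.Injective f)
    (hess : (LinearMap.range f).IsEssential) :
    associatedPrimes R E ⊆ {p} := by
  intro q hq
  obtain ⟨hqprime, y, rfl⟩ := isAssociatedPrime_iff.1 hq
  have hy : y ≠ 0 := by
    rintro rfl
    exact hqprime.ne_top (by simp)
  obtain ⟨r, hr⟩ := exists_colon_bot_smul_eq hf hess hy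
  have hry : r ∉ (⊥ : Submodule R E).colon {y} := by
    intro hr'
    rw [mem_colon_singleton, mem_bot] at hr'
    refine Ideal.IsPrime.ne_top' (I := p) ?_
    rw [← hr, hr', eq_top_iff]
    exact fun s _ ↦ by simp [mem_colon_singleton]
  rw [Set.mem_singleton_iff, ← hr]
  ext s
  simpa only [mem_colon_singleton, mem_bot, smul_smul] using (hqprime.mul_mem_right_iff hry).symm

theorem exists_pow_le_annihilator_of_fg [IsNoetherianRing R] (hf : Function.Injective f)
    (hess : (LinearMap.range f).IsEssential)
    (N : Submodule R E) [Module.Finite R N] : ∃ n : ℕ, p ^ n ≤ N.annihilator :=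
  exists_pow_le_annihilator_of_associatedPrimes_subset
    ((associatedPrimes.subset_of_injective N.injective_subtype).trans
      (associatedPrimes_subset_singleton hf hess))

theorem not_pow_le_annihilator_of_injective (hE : Module.Injective R E)
    (hf : Function.Injective f) {q : Ideal R} [q.IsPrime] (hqp : q < p) (t : ℕ) :
    ¬p ^ t ≤ Module.annihilator R E := by
  obtain ⟨a, hap, haq⟩ := SetLike.exists_of_lt hqp
  have hx : f 1 ≠ 0 := (map_ne_zero_iff f hf).2 one_ne_zero
  obtain ⟨y, hy⟩ := hE.exists_smul_eq_of_colon_le (r := a ^ t) (x := f 1) fun c hc ↦ by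
    rw [mem_colon_singleton, mem_bot, smul_eq_mul] at hc
    have hcq : c ∈ q := (Ideal.IsPrime.mul_mem_right_iff fun h ↦ haq
      (Ideal.IsPrime.mem_of_pow_mem ‹_› t h)).1 (hc ▸ q.zero_mem)
    rw [mem_colon_singleton, mem_bot, ← map_smul, map_eq_zero_iff f hf,
      Ideal.Quotient.smul_eq_zero_iff_of_ne_zero one_ne_zero]
    exact hqp.le hcq
  exact fun hle ↦ hx (hy ▸ Module.mem_annihilator.1 (hle (Ideal.pow_mem_pow hap t)) y)

theorem exists_colon_le_of_pow_le_annihilator (hE : Module.Injective R E)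
    (hf : Function.Injective f) (hess : (LinearMap.range f).IsEssential) {q : Ideal R} [q.IsPrime]
    (hqp : q < p) {L : Submodule R E} {t : ℕ} (hL : p ^ t ≤ L.annihilator) :
    ∃ x : E, L.colon {x} ≤ p := by
  by_contra! H
  refine not_pow_le_annihilator_of_injective hE hf hqp t fun r hr ↦
    Module.mem_annihilator.2 fun x ↦ ?_
  obtain ⟨s, hs, hsp⟩ := SetLike.not_le_iff_exists.1 (H x)
  refine eq_zero_of_smul_eq_zero_of_notMem hf hess hsp ?_
  rw [smul_comm]
  exact Submodule.mem_annihilator.1 (hL hr) _ (mem_colon_singleton.1 hs)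

end EssentialExtension

/-- If `E` is an injective module containing a copy of `R/p` as an
essential submodule and `E ∈ NS` for a Serre class `S`, then `E ∈ S` provided either
`ht p > 0`, or `ht p = 0` and `R/p ∈ S`. -/
theorem injEnvelope_mem_of_mem_extCls_fg (R : Type u) [CommRing R] [IsNoetherianRing R]
    (p : Ideal R) (hp : p.IsPrime)
    (E : Type u) [AddCommGroup E] [Module R E] (hE : Module.Injective R E)
    (f : (R ⧸ p) →ₗ[R] E) (hf : Function.Injective f)
    (hess : ∀ N : Submodule R E, N ≠ ⊥ → LinearMap.range f ⊓ N ≠ ⊥)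
    (S : ModClass R) (hS : IsSerre R S)
    (hmem : ModuleCat.of R E ∈ ExtCls R (FGCls R) S)
    (h : 0 < Order.height (⟨p, hp⟩ : PrimeSpectrum R) ∨
      (Order.height (⟨p, hp⟩ : PrimeSpectrum R) = 0 ∧ ModuleCat.of R (R ⧸ p) ∈ S)) :
    ModuleCat.of R E ∈ S := by
  obtain ⟨L, hLfin, hLS⟩ := hmem
  have : Module.Finite R L := hLfin
  obtain ⟨t, ht⟩ := exists_pow_le_annihilator_of_fg hf hess L
  have hRp : ModuleCat.of R (R ⧸ p) ∈ S := by
    rcases h with hpos | ⟨-, hRp⟩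
    · obtain ⟨q, hqp⟩ := not_isMin_iff.1 (Order.height_pos.1 hpos)
      obtain ⟨x, hx⟩ := exists_colon_le_of_pow_le_annihilator hE hf hess
        ((PrimeSpectrum.asIdeal_lt_asIdeal _ _).2 hqp) ht
      exact hS.quotient_mem_of_colon_le hLS hx
    · exact hRp
  exact hS.ext _ L (hS.mem_of_pow_le_annihilator hRp t ht) hLS
end
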